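/- There exist constants C > 0 and h₀ ∈ (0,1) such that for all h ∈ (0,h₀): |A_h − √2| ≤ C·h^{−ρ/2}·exp(−h^{−ρ}). -/

import Mathlib

/-! With `L = h^{-ρ}` and `E = exp(-2wL)`, the secular equation says `E = (1 - w) / (1 + w)`.
Comparing with `exp(2wL) ≥ 1 + 2wL` forces `w ≥ 1 - 1/L`, hence `E ≤ e² e^{-2L}`. At such a root
the normalising integral has the closed form `(1 + E)² / 2 - 2EL`, which is within `2EL` of `1/2`,
and `x ↦ x^{-1/2}` is `4`-Lipschitz on `[1/4, ∞)`. So `|A - √2| ≤ 8EL ≤ 8e² L e^{-2L}`, and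
`√L e^{-L} ≤ 1` turns this into the bound `8e² √L e^{-L}`. -/

open Real Set

noncomputable section

/-- The secular function whose zeros `w > 0` correspond, via `λ = -w²`, to the negative
eigenvalues of the 1D Laplacian on `(0, h^{-ρ})` with Robin condition `u'(0) = -u(0)`
and Dirichlet condition `u(h^{-ρ}) = 0`. -/
def secular (ρ h v : ℝ) : ℝ := v - 1 + (v + 1) * Real.exp (-2 * v * h ^ (-ρ))

theorem integral_sq_exp_neg_sub_exp (w L : ℝ) (hw : w ≠ 0) :
    ∫ τ in (0 : ℝ)..L, (exp (-w * τ) - exp (-2 * w * L) * exp (w * τ)) ^ 2 =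
      (1 - exp (-2 * w * L) ^ 2) / (2 * w) - 2 * exp (-2 * w * L) * L := by
  set c := exp (-2 * w * L) with hc_def
  have hsq : ∀ τ, (exp (-w * τ) - c * exp (w * τ)) ^ 2 =
      exp (τ * (-2 * w)) - 2 * c + c ^ 2 * exp (τ * (2 * w)) := by
    intro τ
    have h1 : exp (-w * τ) ^ 2 = exp (τ * (-2 * w)) := by rw [sq, ← exp_add]; ring_nf
    have h2 : exp (w * τ) ^ 2 = exp (τ * (2 * w)) := by rw [sq, ← exp_add]; ring_nf
    have h3 : exp (-w * τ) * exp (w * τ) = 1 := by rw [← exp_add]; simp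
    linear_combination h1 + c ^ 2 * h2 - 2 * c * h3
  have hF : ∀ τ, HasDerivAt
      (fun t => (c ^ 2 * exp (t * (2 * w)) - exp (t * (-2 * w))) / (2 * w) - t * (2 * c))
      (exp (τ * (-2 * w)) - 2 * c + c ^ 2 * exp (τ * (2 * w))) τ := fun τ =>
    ((((hasDerivAt_mul_const (x := τ) (2 * w)).exp.const_mul (c ^ 2)).sub
      (hasDerivAt_mul_const (-2 * w)).exp).div_const (2 * w)).sub
      (hasDerivAt_mul_const (2 * c)) |>.congr_deriv (by field_simp; ring)
  simp_rw [hsq]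
  rw [intervalIntegral.integral_eq_sub_of_hasDerivAt (fun τ _ => hF τ)
    (by apply Continuous.intervalIntegrable; fun_prop)]
  have hc : c ^ 2 * exp (L * (2 * w)) = c := by
    rw [sq, mul_assoc, ← exp_add]; ring_nf; simp
  have hc' : exp (L * (-2 * w)) = c := by rw [hc_def, mul_comm]
  simp only [zero_mul, exp_zero, hc, hc']
  field_simp
  ring

theorem one_sub_inv_le_of_secular_root {w L : ℝ} (hL : 0 < L) (hw : 0 < w)
    (hroot : w - 1 + (w + 1) * exp (-2 * w * L) = 0) : 1 - L⁻¹ ≤ w := by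
  rcases le_or_gt 1 w with hw1 | hw1
  · linarith [inv_pos.2 hL]
  have hinv : exp (-2 * w * L) * exp (2 * w * L) = 1 := by rw [← exp_add]; simp
  have hroot' : (1 - w) * exp (2 * w * L) = 1 + w := by
    linear_combination -exp (2 * w * L) * hroot + (w + 1) * hinv
  have hlin : (1 - w) * (2 * w * L + 1) ≤ 1 + w :=
    hroot' ▸ mul_le_mul_of_nonneg_left (add_one_le_exp _) (by linarith)
  have hL1 : L * (1 - w) ≤ 1 := le_of_mul_le_mul_left (by nlinarith) (by linarith : 0 < 2 * w)
  linarith [(le_inv_mul_iff₀ hL).2 hL1]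

theorem exp_neg_two_mul_le_of_secular_root {w L : ℝ} (hL : 0 < L) (hw : 0 < w)
    (hroot : w - 1 + (w + 1) * exp (-2 * w * L) = 0) :
    exp (-2 * w * L) ≤ exp (2 - 2 * L) := by
  have hlow := one_sub_inv_le_of_secular_root hL hw hroot
  have hwL : L - 1 ≤ w * L := by
    calc L - 1 = (1 - L⁻¹) * L := by field_simp
      _ ≤ w * L := by gcongr
  gcongr
  linarith

theorem abs_integral_sq_sub_half_le_of_secular_root {w L : ℝ} (hL : 1 ≤ L) (hw : 0 < w)
    (hroot : w - 1 + (w + 1) * exp (-2 * w * L) = 0) :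
    |(∫ τ in (0 : ℝ)..L, (exp (-w * τ) - exp (-2 * w * L) * exp (w * τ)) ^ 2) - 1 / 2| ≤
      2 * L * exp (2 - 2 * L) := by
  have hE := exp_neg_two_mul_le_of_secular_root (by linarith) hw hroot
  have hE1 : exp (-2 * w * L) ≤ 1 := exp_le_one_iff.2 (by nlinarith)
  rw [integral_sq_exp_neg_sub_exp w L hw.ne']
  set E := exp (-2 * w * L)
  have hE0 : 0 < E := exp_pos _
  have hclosed : (1 - E ^ 2) / (2 * w) - 2 * E * L = (1 + E) ^ 2 / 2 - 2 * E * L := by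
    field_simp
    linear_combination (-1 - E) * hroot
  rw [hclosed, abs_le]
  constructor <;> nlinarith

theorem abs_rpow_neg_half_sub_sqrt_two_le {x : ℝ} (hx : 1 / 4 ≤ x) :
    |x ^ (-(1 : ℝ) / 2) - √2| ≤ 4 * |x - 1 / 2| := by
  have hx0 : 0 < x := by linarith
  have hs : 1 / 2 ≤ √x := (le_sqrt' (by norm_num)).2 (by linarith)
  have hrpow : x ^ (-(1 : ℝ) / 2) = (√x)⁻¹ := by
    rw [sqrt_eq_rpow, ← rpow_neg hx0.le]; norm_num
  have hfactor : ((√x)⁻¹ - √2) * (√x * (1 + √2 * √x)) = -2 * (x - 1 / 2) := by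
    field_simp
    linear_combination (-(√x) ^ 2) * sq_sqrt (zero_le_two (α := ℝ)) - 2 * sq_sqrt hx0.le
  have hd : 1 / 2 ≤ √x * (1 + √2 * √x) := by
    nlinarith [mul_nonneg (mul_nonneg (sqrt_nonneg 2) (sqrt_nonneg x)) (sqrt_nonneg x)]
  have habs := congrArg abs hfactor
  rw [abs_mul (_ - _), abs_of_pos (by linarith : 0 < √x * (1 + √2 * √x)), abs_mul] at habs
  rw [hrpow]
  nlinarith [abs_nonneg ((√x)⁻¹ - √2)]

theorem sq_mul_exp_two_sub_two_mul_le_one {L : ℝ} (hL : 0 ≤ L) :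
    L ^ 2 * exp (2 - 2 * L) ≤ 1 := by
  have h : L ≤ exp (L - 1) := by linarith [add_one_le_exp (L - 1)]
  calc L ^ 2 * exp (2 - 2 * L) ≤ exp (L - 1) ^ 2 * exp (2 - 2 * L) := by gcongr
    _ = 1 := by rw [← exp_nat_mul, ← exp_add]; ring_nf; exact exp_zero

theorem mul_exp_two_sub_two_mul_le {L : ℝ} (hL : 0 ≤ L) :
    L * exp (2 - 2 * L) ≤ exp 2 * (√L * exp (-L)) := by
  have h : √L * exp (-L) ≤ 1 := by
    rw [← le_div_iff₀ (exp_pos _), div_eq_mul_inv, one_mul, ← exp_neg, neg_neg,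
      sqrt_le_left (exp_pos _).le, ← exp_nat_mul]
    push_cast
    linarith [add_one_le_exp (2 * L)]
  calc L * exp (2 - 2 * L) = exp 2 * (√L * exp (-L)) * (√L * exp (-L)) := by
        rw [show exp 2 * (√L * exp (-L)) * (√L * exp (-L)) = √L * √L * exp (2 + -L + -L) by
          rw [exp_add, exp_add]; ring, mul_self_sqrt hL]
        ring_nf
    _ ≤ exp 2 * (√L * exp (-L)) := mul_le_of_le_one_right (by positivity) h

theorem exists_lt_rpow_neg {ρ : ℝ} (hρ : 0 < ρ) {L₀ : ℝ} (hL₀ : 1 < L₀) :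
    ∃ h₀ ∈ Ioo (0 : ℝ) 1, ∀ h ∈ Ioo 0 h₀, L₀ < h ^ (-ρ) := by
  refine ⟨L₀ ^ (-ρ⁻¹), ⟨rpow_pos_of_pos (by linarith) _,
    rpow_lt_one_of_one_lt_of_neg hL₀ (by simpa using hρ)⟩, fun h hh => ?_⟩
  calc L₀ = (L₀ ^ (-ρ⁻¹)) ^ (-ρ) := by
        rw [← rpow_mul (by linarith), neg_mul_neg, inv_mul_cancel₀ hρ.ne', rpow_one]
    _ < h ^ (-ρ) := rpow_lt_rpow_of_neg hh.1 hh.2 (by linarith)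

theorem normalization_constant_asymptotics (ρ : ℝ) (hρ : ρ ∈ Set.Ioo (0 : ℝ) 1) :
    ∃ C > (0 : ℝ), ∃ h₀ ∈ Set.Ioo (0 : ℝ) 1, ∀ h ∈ Set.Ioo (0 : ℝ) h₀,
      ∀ w : ℝ, 0 < w → secular ρ h w = 0 →
        ∀ A : ℝ,
          A = (∫ τ in (0 : ℝ)..(h ^ (-ρ)),
              (Real.exp (-w * τ) - Real.exp (-2 * w * h ^ (-ρ)) * Real.exp (w * τ)) ^ 2) ^
            (-(1 : ℝ) / 2) →
          |A - Real.sqrt 2| ≤ C * h ^ (-ρ / 2) * Real.exp (-h ^ (-ρ)) := by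
  obtain ⟨h₀, hh₀, hlarge⟩ := exists_lt_rpow_neg hρ.1 (by norm_num : (1 : ℝ) < 8)
  refine ⟨8 * exp 2, by positivity, h₀, hh₀, fun h hh w hw hroot A hA => ?_⟩
  have hL : 8 < h ^ (-ρ) := hlarge h hh
  have hI := abs_integral_sq_sub_half_le_of_secular_root (by linarith) hw hroot
  have hL2 := sq_mul_exp_two_sub_two_mul_le_one (L := h ^ (-ρ)) (by linarith)
  set L := h ^ (-ρ)
  set I := ∫ τ in (0 : ℝ)..L, (exp (-w * τ) - exp (-2 * w * L) * exp (w * τ)) ^ 2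
  have hI4 : 1 / 4 ≤ I := by nlinarith [abs_le.1 hI, exp_pos (2 - 2 * L)]
  calc |A - √2| ≤ 4 * |I - 1 / 2| := hA ▸ abs_rpow_neg_half_sub_sqrt_two_le hI4
    _ ≤ 8 * (L * exp (2 - 2 * L)) := by linarith
    _ ≤ 8 * (exp 2 * (√L * exp (-L))) := by
        gcongr 8 * ?_; exact mul_exp_two_sub_two_mul_le (by linarith)
    _ = 8 * exp 2 * h ^ (-ρ / 2) * exp (-L) := by
        rw [sqrt_eq_rpow, ← rpow_mul hh.1.le]; ring_nf
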